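/- Inclusion of a small ball in the pulled-back middle region: Let P = 0 ∈ Σ with local C^{1,1} graph ψ (ψ(0) = 0, ∇ψ(0) = 0), and let Ψ_P(x', x_n) = (x', x_n − ψ(x')), η(x') = ψ(x')/|x'|², ‖η‖ = ‖η‖_{L^∞(B'_{ρ₀}(0))}. Set ρ₁ = α₋δ/(δ+β), let ρ₂ satisfy 2‖η‖ρ₂ + ‖η‖²ρ₂² < 1/2, and ρ₃ = 2α₋δ/β. If r < θ · min{ δR₁/(6aα₋), 2δR₂/(3α₋), R₁/(12a), θ⁻¹ρ₀, ρ₁, ρ₂, ρ₃ }, then Ψ_P(B_r(P)) ⊂ θU₂. -/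

import Mathlib

open MeasureTheory Metric Set
open scoped Pointwise ENNReal Matrix ComplexConjugate
noncomputable section

/-- Euclidean space `ℝ^n`. -/
abbrev Euc (n : ℕ) := EuclideanSpace ℝ (Fin n)

/-- Partial derivative `∂_i f` of a complex valued function. -/
def pd {m : ℕ} (i : Fin m) (f : Euc m → ℂ) (x : Euc m) : ℂ :=
  fderiv ℝ f x (EuclideanSpace.single i 1)

/-- Partial derivative `∂_i f` of a real valued function. -/
def pdR {m : ℕ} (i : Fin m) (f : Euc m → ℝ) (x : Euc m) : ℝ :=
  fderiv ℝ f x (EuclideanSpace.single i 1)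

/-- The `L²(s)` norm of `u`. -/
def l2 {m : ℕ} (u : Euc m → ℂ) (s : Set (Euc m)) : ℝ :=
  Real.sqrt (∫ x in s, ‖u x‖ ^ 2)

/-- A point of `ℝ^{n+1}` from `(x', x_n)`. -/
def emb {n : ℕ} (x' : Euc n) (t : ℝ) : Euc (n+1) :=
  WithLp.toLp 2 (Fin.snoc (α := fun _ => ℝ) (fun j => x' j) t)

/-- The horizontal component `x'` of a point `x = (x', x_n)` of `ℝ^{n+1}`. -/
def low {n : ℕ} (x : Euc (n+1)) : Euc n := WithLp.toLp 2 (fun j : Fin n => x j.castSucc)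

/-- The vertical (last) component `x_n` of a point of `ℝ^{n+1}`. -/
def xlast {n : ℕ} (x : Euc (n+1)) : ℝ := x (Fin.last n)

/-- The upper half space `x_n > 0`. -/
def HPos (n : ℕ) : Set (Euc (n+1)) := {x | 0 < xlast x}

/-- The lower half space `x_n < 0`. -/
def HNeg (n : ℕ) : Set (Euc (n+1)) := {x | xlast x < 0}

/-- `u = H₊ u₊ + H₋ u₋`. -/
def pw {n : ℕ} (up um : Euc (n+1) → ℂ) (x : Euc (n+1)) : ℂ :=
  if 0 < xlast x then up x else if xlast x < 0 then um x else 0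

/-- The matrix `A(x)` is symmetric on `S`. -/
def MatSymmOn {m : ℕ} (A : Euc m → Matrix (Fin m) (Fin m) ℂ) (S : Set (Euc m)) : Prop :=
  ∀ x ∈ S, ∀ l j, A x l j = A x j l

/-- `λ₀ |ξ|² ≤ Re A(x) ξ·ξ ≤ λ₀⁻¹ |ξ|²` on `S`. -/
def ReElliptic {m : ℕ} (A : Euc m → Matrix (Fin m) (Fin m) ℂ) (S : Set (Euc m)) (lam : ℝ) : Prop :=
  ∀ x ∈ S, ∀ ξ : Fin m → ℝ,
    lam * (∑ j, ξ j ^ 2) ≤ ∑ l, ∑ j, (A x l j).re * ξ l * ξ j ∧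
    ∑ l, ∑ j, (A x l j).re * ξ l * ξ j ≤ lam⁻¹ * (∑ j, ξ j ^ 2)

/-- `Im A = γ N` with `λ₀ |ξ|² ≤ N(x) ξ·ξ ≤ λ₀⁻¹ |ξ|²` on `S`. -/
def ImElliptic {m : ℕ} (A : Euc m → Matrix (Fin m) (Fin m) ℂ) (S : Set (Euc m)) (lam gam : ℝ) : Prop :=
  ∀ x ∈ S, ∀ ξ : Fin m → ℝ,
    gam * (lam * (∑ j, ξ j ^ 2)) ≤ ∑ l, ∑ j, (A x l j).im * ξ l * ξ j ∧
    ∑ l, ∑ j, (A x l j).im * ξ l * ξ j ≤ gam * (lam⁻¹ * (∑ j, ξ j ^ 2))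

/-- `|A(x) − A(y)| ≤ M₀ |x − y|` on `S` (entrywise). -/
def LipCoefOn {m : ℕ} (A : Euc m → Matrix (Fin m) (Fin m) ℂ) (S : Set (Euc m)) (M0 : ℝ) : Prop :=
  ∀ x ∈ S, ∀ y ∈ S, ∀ l j, ‖A x l j - A y l j‖ ≤ M0 * dist x y

/-- The leading coefficient `A = M + iγN` is symmetric, elliptic and Lipschitz on `S`. -/
def GoodCoef {m : ℕ} (A : Euc m → Matrix (Fin m) (Fin m) ℂ) (S : Set (Euc m))
    (lam M0 gam : ℝ) : Prop :=
  MatSymmOn A S ∧ ReElliptic A S lam ∧ ImElliptic A S lam gam ∧ LipCoefOn A S M0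

/-- The (formal) second order operator `div(A ∇u)`. -/
def Lop {m : ℕ} (A : Euc m → Matrix (Fin m) (Fin m) ℂ) (u : Euc m → ℂ) (x : Euc m) : ℂ :=
  ∑ l, pd l (fun y => ∑ j, A y l j * pd j u y) x

/-- `div(A ∇u) + W·∇u + V u`. -/
def LopFull {m : ℕ} (A : Euc m → Matrix (Fin m) (Fin m) ℂ) (W : Euc m → Fin m → ℂ)
    (V : Euc m → ℂ) (u : Euc m → ℂ) (x : Euc m) : ℂ :=
  Lop A u x + (∑ j, W x j * pd j u x) + V x * u x

/-- The weight `φ(x) = α x_n/δ + β x_n²/(2δ²) − |x'|²/(2δ)` (a branch of `φ_δ`). -/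
def wphi {n : ℕ} (α β δ : ℝ) (x : Euc (n+1)) : ℝ :=
  α * xlast x / δ + β * (xlast x) ^ 2 / (2 * δ ^ 2) - ‖low x‖ ^ 2 / (2 * δ)

/-- The squared `H^{1/2}(ℝ^m)` seminorm `[f]²_{1/2}`. -/
def semi2 {m : ℕ} (f : Euc m → ℂ) : ℝ :=
  ∫ x : Euc m, ∫ y : Euc m, ‖f x - f y‖ ^ 2 / dist x y ^ (m + 1)

/-- The transmission datum `h₀ = u₊(·,0) − u₋(·,0)`. -/
def h0fun {n : ℕ} (up um : Euc (n+1) → ℂ) (x' : Euc n) : ℂ :=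
  up (emb x' 0) - um (emb x' 0)

/-- The transmission datum `h₁ = A₊∇u₊·e_n − A₋∇u₋·e_n` at `x_n = 0`. -/
def h1fun {n : ℕ} (Ap Am : Euc (n+1) → Matrix (Fin (n+1)) (Fin (n+1)) ℂ)
    (up um : Euc (n+1) → ℂ) (x' : Euc n) : ℂ :=
  (∑ j, Ap (emb x' 0) (Fin.last n) j * pd j up (emb x' 0)) -
  (∑ j, Am (emb x' 0) (Fin.last n) j * pd j um (emb x' 0))


/-- The interface-flattening map `Ψ_P(x', x_n) = (x', x_n − ψ(x'))` (with `P = 0`). -/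
def PsiMap {n : ℕ} (ψ : Euc n → ℝ) (x : Euc (n+1)) : Euc (n+1) :=
  emb (low x) (xlast x - ψ (low x))

/-- `ψ` is a `C^{1,1}` graph function with constants `ρ₀`, `K₀`:
`ψ(0) = 0`, `∇ψ(0) = 0`, `‖ψ‖_{C^{1,1}(B'_{ρ₀})} ≤ K₀`. -/
def C11GraphFn {n : ℕ} (ψ : Euc n → ℝ) (ρ0 K0 : ℝ) : Prop :=
  ψ 0 = 0 ∧ fderiv ℝ ψ 0 = 0 ∧ ContDiff ℝ 1 ψ ∧
  (∀ y ∈ Metric.ball (0 : Euc n) ρ0, |ψ y| ≤ K0 ∧ ‖fderiv ℝ ψ y‖ ≤ K0) ∧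
  LipschitzOnWith (Real.toNNReal K0) (fun y => fderiv ℝ ψ y) (Metric.ball 0 ρ0)

/-- The region `U₁ = {z ≥ −4R₂, R₁/(8a) < x_n < R₁/a}`, `z = φ_{δ,−}`, `a = α₊/δ`. -/
def regionU1 {n : ℕ} (αp αm β δ R1 R2 : ℝ) : Set (Euc (n+1)) :=
  {x | -4 * R2 ≤ wphi αm β δ x ∧ R1 / (8 * (αp / δ)) < xlast x ∧ xlast x < R1 / (αp / δ)}

/-- The region `U₂ = {−R₂ ≤ z ≤ R₁/(2a), x_n < R₁/(8a)}`. -/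
def regionU2 {n : ℕ} (αp αm β δ R1 R2 : ℝ) : Set (Euc (n+1)) :=
  {x | -R2 ≤ wphi αm β δ x ∧ wphi αm β δ x ≤ R1 / (2 * (αp / δ)) ∧
    xlast x < R1 / (8 * (αp / δ))}

/-- The region `U₃ = {z ≥ −4R₂, x_n < R₁/a}`. -/
def regionU3 {n : ℕ} (αp αm β δ R1 R2 : ℝ) : Set (Euc (n+1)) :=
  {x | -4 * R2 ≤ wphi αm β δ x ∧ xlast x < R1 / (αp / δ)}

/-!
After the dilation by `θ⁻¹` the image point is `(y', X - e)` with `|y'|² + X² < ρ²`, `ρ = r/θ`,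
and `|e| = |ψ(x')|/θ ≤ ρ/4` by the quadratic bound on `ψ`. Since `ρ ≤ α₋`, on this disc
`|y'|² + 2α₋|X| ≤ 2α₋ρ`, which bounds the weight from below; from above it is controlled by
`|X - e| ≤ 5ρ/4` and `βρ < 2α₋δ`. Each remaining smallness condition on `ρ` then yields one of
the three inequalities defining `U₂`.
-/

lemma xlast_emb {n : ℕ} (y : Euc n) (t : ℝ) : xlast (emb y t) = t := by simp [xlast, emb]

lemma low_emb {n : ℕ} (y : Euc n) (t : ℝ) : low (emb y t) = y := by ext j; simp [low, emb]

lemma xlast_smul {n : ℕ} (c : ℝ) (x : Euc (n+1)) : xlast (c • x) = c * xlast x := rfl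

lemma low_smul {n : ℕ} (c : ℝ) (x : Euc (n+1)) : low (c • x) = c • low x := by ext j; simp [low]

lemma smul_emb {n : ℕ} (c : ℝ) (y : Euc n) (t : ℝ) : c • emb y t = emb (c • y) (c * t) := by
  ext i
  refine Fin.lastCases ?_ (fun j => ?_) i <;> simp [emb]

lemma smul_PsiMap {n : ℕ} (c : ℝ) (ψ : Euc n → ℝ) (x : Euc (n+1)) :
    c • PsiMap ψ x = emb (low (c • x)) (xlast (c • x) - c * ψ (low x)) := by
  rw [PsiMap, smul_emb, low_smul, xlast_smul, mul_sub]

lemma norm_low_sq_add_xlast_sq {n : ℕ} (x : Euc (n+1)) : ‖low x‖ ^ 2 + xlast x ^ 2 = ‖x‖ ^ 2 := by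
  simp only [EuclideanSpace.norm_sq_eq, Fin.sum_univ_castSucc, Real.norm_eq_abs, sq_abs]
  rfl

lemma norm_low_le {n : ℕ} (x : Euc (n+1)) : ‖low x‖ ≤ ‖x‖ :=
  (pow_le_pow_iff_left₀ (norm_nonneg _) (norm_nonneg _) two_ne_zero).mp <| by
    rw [← norm_low_sq_add_xlast_sq]; nlinarith [sq_nonneg (xlast x)]

lemma wphi_emb {n : ℕ} (α β δ : ℝ) (y : Euc n) (t : ℝ) :
    wphi α β δ (emb y t) = α * t / δ + β * t ^ 2 / (2 * δ ^ 2) - ‖y‖ ^ 2 / (2 * δ) := by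
  rw [wphi, xlast_emb, low_emb]

lemma sq_add_two_mul_abs_le {s X α ρ : ℝ} (hρ : 0 ≤ ρ) (hρα : ρ ≤ α)
    (h : s ^ 2 + X ^ 2 ≤ ρ ^ 2) : s ^ 2 + 2 * α * |X| ≤ 2 * α * ρ := by
  have hX : |X| ≤ ρ := abs_le_of_sq_le_sq (by nlinarith) hρ
  nlinarith [sq_abs X, mul_nonneg (sub_nonneg.mpr hX) (by linarith : 0 ≤ 2 * α - ρ - |X|)]

lemma emb_sub_mem_regionU2 {n : ℕ} {αp αm β δ R1 R2 ρ e : ℝ}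
    (hαm : 0 < αm) (hαp : 0 < αp) (hβ : 0 < β) (hδ : 0 < δ)
    (hρtop : ρ < δ * R1 / (6 * (αp / δ) * αm)) (hρbot : ρ < 2 * δ * R2 / (3 * αm))
    (hρxn : ρ < R1 / (12 * (αp / δ))) (hρα : ρ < αm * δ / (δ + β)) (hρβ : ρ < 2 * αm * δ / β)
    {x : Euc (n+1)} (hx : ‖x‖ < ρ) (he : |e| ≤ ρ / 4) :
    emb (low x) (xlast x - e) ∈ regionU2 αp αm β δ R1 R2 := by
  simp only [regionU2, mem_ofPred_eq, xlast_emb]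
  set a := αp / δ
  set s := ‖low x‖
  set t := xlast x - e
  have ha : 0 < a := by positivity
  have hρ : 0 ≤ ρ := (norm_nonneg x).trans hx.le
  rw [lt_div_iff₀ (by positivity)] at hρtop hρbot hρxn hρα hρβ
  have hdisc : s ^ 2 + xlast x ^ 2 ≤ ρ ^ 2 := by
    rw [norm_low_sq_add_xlast_sq]; exact pow_le_pow_left₀ (norm_nonneg x) hx.le 2
  have hparab : s ^ 2 + 2 * αm * |xlast x| ≤ 2 * αm * ρ :=
    sq_add_two_mul_abs_le hρ (by nlinarith) hdisc
  have hXρ : |xlast x| ≤ ρ := abs_le_of_sq_le_sq (by nlinarith) hρ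
  have ht : |t| ≤ 5 * ρ / 4 := (abs_sub _ _).trans (by linarith)
  have hwphi : wphi αm β δ (emb (low x) t) =
      (2 * αm * δ * t + β * t ^ 2 - δ * s ^ 2) / (2 * δ ^ 2) := by
    rw [wphi_emb]; field_simp; ring
  refine ⟨?_, ?_, ?_⟩
  · rw [hwphi, le_div_iff₀ (by positivity)]
    have hlin : -(5 / 2) * αm * ρ ≤ 2 * αm * t - s ^ 2 := by
      have : -t ≤ |xlast x| + |e| := by linarith [neg_abs_le (xlast x), le_abs_self e]
      nlinarith
    nlinarith [mul_le_mul_of_nonneg_left hlin hδ.le, mul_nonneg hβ.le (sq_nonneg t),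
      mul_lt_mul_of_pos_left hρbot hδ, mul_nonneg hαm.le hρ]
  · rw [hwphi, div_le_div_iff₀ (by positivity) (by positivity)]
    have htsq : t ^ 2 ≤ 5 * ρ / 4 * (5 * ρ / 4) := by
      rw [← sq_abs, sq]; exact mul_le_mul ht ht (abs_nonneg t) (by positivity)
    have hQ : 2 * αm * δ * t + β * t ^ 2 - δ * s ^ 2 ≤ 6 * αm * δ * ρ := by
      nlinarith [mul_le_mul_of_nonneg_left ((le_abs_self t).trans ht)
          (by positivity : 0 ≤ 2 * αm * δ), mul_nonneg hδ.le (sq_nonneg s),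
        mul_le_mul_of_nonneg_left htsq hβ.le, mul_le_mul_of_nonneg_right hρβ.le hρ]
    nlinarith [mul_lt_mul_of_pos_left hρtop hδ]
  · rw [lt_div_iff₀ (by positivity)]
    nlinarith [le_abs_self t, mul_nonneg ha.le hρ]

/-- `Kη` is a bound for `‖η‖ = ‖ψ(x')/|x'|²‖_{L^∞}`. -/
theorem ball_subset_scaled_U2_general (n : ℕ) (αp αm β δ θ R1 R2 ρ0 Kη ρ2 r : ℝ)
    (hαm : 0 < αm) (hα : αm < αp) (hβ : 0 < β) (hδ : 0 < δ)
    (hθ : 0 < θ) (hθ1 : θ ≤ 1) (hKη : 0 ≤ Kη)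
    (ψ : Euc n → ℝ)
    (hη : ∀ y : Euc n, |ψ y| ≤ Kη * ‖y‖ ^ 2)
    (hρ2' : 2 * Kη * ρ2 + Kη ^ 2 * ρ2 ^ 2 < 1 / 2)
    (hrsmall : r < θ * min (δ * R1 / (6 * (αp / δ) * αm))
        (min (2 * δ * R2 / (3 * αm))
        (min (R1 / (12 * (αp / δ)))
        (min (θ⁻¹ * ρ0)
        (min (αm * δ / (δ + β))
        (min ρ2 (2 * αm * δ / β))))))) :
    PsiMap ψ '' Metric.ball (0 : Euc (n+1)) r ⊆ θ • regionU2 αp αm β δ R1 R2 := by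
  rintro _ ⟨x, hx, rfl⟩
  rw [mem_ball_zero_iff] at hx
  rw [mem_smul_set_iff_inv_smul_mem₀ hθ.ne', smul_PsiMap]
  rw [← div_lt_iff₀' hθ] at hrsmall
  simp only [lt_min_iff] at hrsmall
  obtain ⟨hρtop, hρbot, hρxn, -, hρα, hρ2, hρβ⟩ := hrsmall
  have hKηr : Kη * r ≤ 1 / 4 := by
    have hr : r ≤ ρ2 := by
      calc r ≤ r / θ := le_div_self ((norm_nonneg x).trans hx.le) hθ hθ1
        _ ≤ ρ2 := hρ2.le
    -- `2t + t² < 1/2` forces `t = Kη ρ₂ < 1/4`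
    nlinarith [mul_le_mul_of_nonneg_left hr hKη]
  have hψ : |θ⁻¹ * ψ (low x)| ≤ r / θ / 4 := by
    have hlow : ‖low x‖ ≤ r := (norm_low_le x).trans hx.le
    calc |θ⁻¹ * ψ (low x)| = θ⁻¹ * |ψ (low x)| := by rw [abs_mul, abs_of_pos (inv_pos.mpr hθ)]
      _ ≤ θ⁻¹ * (Kη * r * r) := by gcongr; exact (hη _).trans (by rw [mul_assoc, ← sq]; gcongr)
      _ ≤ θ⁻¹ * (1 / 4 * r) := by gcongr; exact (norm_nonneg x).trans hx.le
      _ = r / θ / 4 := by ring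
  refine emb_sub_mem_regionU2 hαm (hαm.trans hα) hβ hδ hρtop hρbot hρxn hρα hρβ ?_ hψ
  rw [norm_smul, norm_inv, Real.norm_of_nonneg hθ.le, inv_mul_eq_div]
  exact div_lt_div_of_pos_right hx hθ

/-- Inclusion of a small ball in the pulled-back middle region ([CW, Lemma 3.1]).
`Kη` is a bound for `‖η‖ = ‖ψ(x')/|x'|²‖_{L^∞}`. -/
theorem ball_subset_scaled_U2 (n : ℕ) (αp αm β δ θ R1 R2 ρ0 K0 Kη ρ2 r : ℝ)
    (hαm : 0 < αm) (hα : αm < αp) (hβ : 0 < β) (hδ : 0 < δ)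
    (hθ : 0 < θ) (hθ1 : θ ≤ 1) (hR1 : 0 < R1) (hR2 : 0 < R2)
    (hρ0 : 0 < ρ0) (hK0 : 0 < K0) (hKη : 0 ≤ Kη) (hρ2 : 0 < ρ2) (hr : 0 < r)
    (ψ : Euc n → ℝ) (hψ : C11GraphFn ψ ρ0 K0)
    (hη : ∀ y : Euc n, |ψ y| ≤ Kη * ‖y‖ ^ 2)
    (hρ2' : 2 * Kη * ρ2 + Kη ^ 2 * ρ2 ^ 2 < 1 / 2)
    (hrsmall : r < θ * min (δ * R1 / (6 * (αp / δ) * αm))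
        (min (2 * δ * R2 / (3 * αm))
        (min (R1 / (12 * (αp / δ)))
        (min (θ⁻¹ * ρ0)
        (min (αm * δ / (δ + β))
        (min ρ2 (2 * αm * δ / β))))))) :
    PsiMap ψ '' Metric.ball (0 : Euc (n+1)) r ⊆ θ • regionU2 αp αm β δ R1 R2 :=
  ball_subset_scaled_U2_general n αp αm β δ θ R1 R2 ρ0 Kη ρ2 r hαm hα hβ hδ hθ hθ1 hKη ψ hη hρ2'
    hrsmall
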